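/- arXiv:1807.00025 — 2 statements merged into one kernel-verified Lean document; each statement's English description precedes it below -/
import Mathlib

section
/- Let F ⊂ ℝ² be a lattice line segment with endpoints in ℤ², and let v : ℝ² → ℝ be an affine function with v integer-valued at both endpoints of F. Fix d ≥ 2. For n coprime to d, let N̄(n/d) be the number of lattice points P ∈ F ∩ ℤ² with v(P) ≡ n/d (mod ℤ). Then N̄(n/d) is independent of n ∈ (ℤ/dℤ)×. -/
/-- The natural embedding of the lattice `ℤ²` into `ℝ²`. -/
def toR (P : ℤ × ℤ) : ℝ × ℝ := ((P.1 : ℝ), (P.2 : ℝ))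

/-!
Write `P₁ = P₀ + g • e` with `e` primitive. The lattice points of `F` are then `P₀ + j • e` for
`0 ≤ j ≤ g`, and `v (P₀ + j • e) = v P₀ + j Δ / g` with `Δ = v P₁ - v P₀ ∈ ℤ`, so `N̄(n/d)` counts
the `j` with `j Δ / g ≡ n / d (mod ℤ)`. This condition depends only on `j mod g`, and it fails at
`j = g` since `d ∤ n`. For `m, n` prime to `d`, lift `m / n ∈ (ℤ/dℤ)ˣ` to a unit `u` of `ℤ/gdℤ`;
then `j ↦ u j mod g` injects the solutions for `n` into those for `m`, and symmetry gives equality.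
-/

open Finset

lemma toR_add (P Q : ℤ × ℤ) : toR (P + Q) = toR P + toR Q := by
  simp [toR]

lemma toR_zsmul (j : ℤ) (P : ℤ × ℤ) : toR (j • P) = (j : ℝ) • toR P := by
  simp [toR]

lemma toR_injective : Function.Injective toR := by
  rintro ⟨a, b⟩ ⟨c, d⟩ h
  simpa [toR] using h

lemma exists_eq_add_zsmul_of_ne {P₀ P₁ : ℤ × ℤ} (hne : P₀ ≠ P₁) :
    ∃ g : ℕ, 0 < g ∧ ∃ e : ℤ × ℤ, IsCoprime e.1 e.2 ∧ P₁ = P₀ + (g : ℤ) • e := by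
  set D := P₁ - P₀ with hD
  have hD0 : D.1 ≠ 0 ∨ D.2 ≠ 0 := by
    by_contra! h
    exact hne (sub_eq_zero.mp (Prod.ext h.1 h.2)).symm
  have hg := Int.gcd_pos_iff.mpr hD0
  refine ⟨_, hg, (D.1 / D.1.gcd D.2, D.2 / D.1.gcd D.2),
    Int.isCoprime_iff_gcd_eq_one.mpr (Int.gcd_ediv_gcd_ediv_gcd hg), ?_⟩
  rw [← sub_eq_iff_eq_add', ← hD]
  ext <;> simp [Int.mul_ediv_cancel' (Int.gcd_dvd_left ..),
    Int.mul_ediv_cancel' (Int.gcd_dvd_right ..)]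

lemma toR_mem_segment_iff {P₀ e : ℤ × ℤ} (he : IsCoprime e.1 e.2) {g : ℤ} (hg : 0 < g)
    (P : ℤ × ℤ) :
    toR P ∈ segment ℝ (toR P₀) (toR (P₀ + g • e)) ↔ ∃ j ∈ Icc 0 g, P₀ + j • e = P := by
  have hgR : (0 : ℝ) < g := by exact_mod_cast hg
  simp only [segment_eq_image', toR_add, toR_zsmul, add_sub_cancel_left, smul_smul,
    Set.mem_image, Set.mem_Icc, Finset.mem_Icc]
  constructor
  · rintro ⟨t, ⟨ht0, ht1⟩, hP⟩
    obtain ⟨a, b, hab⟩ := he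
    have hP₁ := congrArg Prod.fst hP
    have hP₂ := congrArg Prod.snd hP
    simp only [toR, Prod.fst_add, Prod.snd_add, Prod.smul_fst, Prod.smul_snd, smul_eq_mul]
      at hP₁ hP₂
    have habR : (a : ℝ) * e.1 + b * e.2 = 1 := by exact_mod_cast hab
    -- Bezout: `t * g` is an integer because `(t * g) • e` is integral and `e` is primitive
    set j := a * (P.1 - P₀.1) + b * (P.2 - P₀.2)
    have hj : t * g = j := by
      simp only [j]; push_cast
      linear_combination (a : ℝ) * hP₁ + b * hP₂ - t * g * habR
    refine ⟨j, ⟨?_, ?_⟩, toR_injective ?_⟩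
    · exact_mod_cast hj ▸ mul_nonneg ht0 hgR.le
    · exact_mod_cast hj ▸ mul_le_of_le_one_left hgR.le ht1
    · rw [toR_add, toR_zsmul, ← hj, ← hP]
  · rintro ⟨j, ⟨hj0, hjg⟩, rfl⟩
    refine ⟨j / g, ⟨by positivity, div_le_one_of_le₀ (by exact_mod_cast hjg) hgR.le⟩, ?_⟩
    rw [toR_add, toR_zsmul, div_mul_cancel₀ _ hgR.ne']

lemma apply_toR_add_zsmul {v : ℝ × ℝ → ℝ} {a b c : ℝ}
    (hv : ∀ p : ℝ × ℝ, v p = a * p.1 + b * p.2 + c) {P₀ e : ℤ × ℤ} {g n₀ n₁ : ℤ} (hg : g ≠ 0)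
    (hn₀ : v (toR P₀) = n₀) (hn₁ : v (toR (P₀ + g • e)) = n₁) (j : ℤ) :
    v (toR (P₀ + j • e)) = n₀ + ((j * (n₁ - n₀) : ℤ) : ℝ) / (g : ℤ) := by
  simp only [hv, toR, Prod.fst_add, Prod.snd_add, Prod.smul_fst, Prod.smul_snd, smul_eq_mul,
    Int.cast_add, Int.cast_mul, Int.cast_sub] at hn₀ hn₁ ⊢
  field_simp
  linear_combination (g : ℝ) * hn₀ + j * hn₁ - j * hn₀

lemma exists_intCast_add_div_sub_div_iff {z x y q r : ℤ} (hq : q ≠ 0) (hr : r ≠ 0) :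
    (∃ k : ℤ, (z : ℝ) + x / q - y / r = k) ↔ x * r ≡ y * q [ZMOD q * r] := by
  have hqR : (q : ℝ) ≠ 0 := by exact_mod_cast hq
  have hrR : (r : ℝ) ≠ 0 := by exact_mod_cast hr
  rw [Int.modEq_iff_dvd]
  constructor
  · rintro ⟨k, hk⟩
    refine ⟨z - k, ?_⟩
    field_simp at hk
    exact_mod_cast (by push_cast; linear_combination -hk :
      ((y * q - x * r : ℤ) : ℝ) = ((q * r * (z - k) : ℤ) : ℝ))
  · rintro ⟨k, hk⟩
    refine ⟨z - k, ?_⟩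
    have hkR : (y : ℝ) * q - x * r = q * r * k := by exact_mod_cast hk
    field_simp
    push_cast
    linear_combination -hkR

/-- The indices `j ∈ [0, g]` with `j Δ / g ≡ n / d (mod ℤ)`. -/
noncomputable def residueFiber (g Δ d n : ℤ) : Finset ℤ :=
  {j ∈ Icc 0 g | j * Δ * d ≡ n * g [ZMOD g * d]}

section

variable {g Δ d : ℤ}

lemma residueFiber_subset_Ico {n : ℤ} (hg : g ≠ 0) (hn : ¬ d ∣ n) :
    residueFiber g Δ d n ⊆ Ico 0 g := by
  intro j hj
  simp only [residueFiber, mem_filter, mem_Icc] at hj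
  obtain ⟨⟨hj0, hjg⟩, hmod⟩ := hj
  refine mem_Ico.2 ⟨hj0, hjg.lt_of_ne fun hj => ?_⟩
  rw [hj] at hmod
  have : g * d ∣ n * g := by
    rw [← Int.modEq_zero_iff_dvd]
    exact hmod.symm.trans (Int.modEq_zero_iff_dvd.2 ⟨Δ, by ring⟩)
  exact hn (Int.dvd_of_mul_dvd_mul_left hg (by rwa [mul_comm n] at this))

lemma card_residueFiber_le {n m u : ℤ} (hg : 0 < g) (hu : IsCoprime u g)
    (hum : u * n ≡ m [ZMOD d]) (hn : ¬ d ∣ n) :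
    #(residueFiber g Δ d n) ≤ #(residueFiber g Δ d m) := by
  have hsub := residueFiber_subset_Ico (Δ := Δ) hg.ne' hn
  refine card_le_card_of_injOn (fun j => u * j % g) (fun j hj => ?_) (fun j hj j' hj' hjj' => ?_)
  · have hmod : j * Δ * d ≡ n * g [ZMOD g * d] := (mem_filter.1 hj).2
    simp only [residueFiber, coe_filter, mem_Icc, Set.mem_ofPred_eq]
    refine ⟨⟨Int.emod_nonneg _ hg.ne', (Int.emod_lt_of_pos _ hg).le⟩, ?_⟩
    calc u * j % g * Δ * d ≡ u * j * Δ * d [ZMOD g * d] :=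
          ((Int.mod_modEq _ _).mul_right Δ).mul_right'
      _ = u * (j * Δ * d) := by ring
      _ ≡ u * (n * g) [ZMOD g * d] := hmod.mul_left u
      _ = u * n * g := by ring
      _ ≡ m * g [ZMOD g * d] := by rw [mul_comm g]; exact hum.mul_right'
  · have hj₀ := mem_Ico.1 (hsub hj)
    have hj₀' := mem_Ico.1 (hsub hj')
    have hmul : u * j ≡ u * j' [ZMOD g] := hjj'
    have hcancel : j ≡ j' [ZMOD g] := by
      rw [Int.modEq_iff_dvd] at hmul ⊢
      exact hu.symm.dvd_of_dvd_mul_left (by rw [mul_sub]; exact hmul)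
    rwa [Int.ModEq, Int.emod_eq_of_lt hj₀.1 hj₀.2, Int.emod_eq_of_lt hj₀'.1 hj₀'.2] at hcancel

end

lemma exists_isCoprime_mul_modEq {d g : ℕ} (hd : d ≠ 0) (hg : g ≠ 0) {m n : ℤ}
    (hm : IsCoprime m d) (hn : IsCoprime n d) :
    ∃ u : ℤ, IsCoprime u g ∧ u * n ≡ m [ZMOD d] := by
  have : NeZero (d * g) := ⟨mul_ne_zero hd hg⟩
  have : NeZero d := ⟨hd⟩
  obtain ⟨w, hw⟩ := ZMod.unitsMap_surjective (dvd_mul_right d g)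
    (ZMod.unitOfIsCoprime m hm * (ZMod.unitOfIsCoprime n hn)⁻¹)
  refine ⟨(w : ZMod (d * g)).val, ?_, ?_⟩
  · exact Nat.isCoprime_iff_coprime.2
      (Nat.Coprime.coprime_mul_left_right (ZMod.val_coe_unit_coprime w))
  · rw [← ZMod.intCast_eq_intCast_iff]
    have hw' := congrArg Units.val hw
    rw [ZMod.unitsMap_val, ZMod.cast_eq_val] at hw'
    push_cast
    rw [hw']
    simp [ZMod.unitOfIsCoprime, mul_assoc, ZMod.coe_int_inv_mul_eq_one hn]

lemma setOf_mem_segment_modEq_eq_image {v : ℝ × ℝ → ℝ} {a b c : ℝ}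
    (hv : ∀ p : ℝ × ℝ, v p = a * p.1 + b * p.2 + c) {P₀ e : ℤ × ℤ} (he : IsCoprime e.1 e.2)
    {g : ℕ} (hg : 0 < g) {n₀ n₁ : ℤ} (hn₀ : v (toR P₀) = n₀)
    (hn₁ : v (toR (P₀ + (g : ℤ) • e)) = n₁) {d : ℕ} (hd : d ≠ 0) (n : ℤ) :
    {P : ℤ × ℤ | toR P ∈ segment ℝ (toR P₀) (toR (P₀ + (g : ℤ) • e)) ∧
        ∃ k : ℤ, v (toR P) - (n : ℝ) / (d : ℝ) = (k : ℝ)} =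
      (residueFiber g (n₁ - n₀) d n).image (fun j => P₀ + j • e) := by
  ext P
  simp only [Set.mem_ofPred_eq, coe_image, Set.mem_image, mem_coe,
    toR_mem_segment_iff he (Int.natCast_pos.2 hg), residueFiber, mem_filter]
  have hvalue (j : ℤ) :
      (∃ k : ℤ, v (toR (P₀ + j • e)) - (n : ℝ) / (d : ℝ) = k) ↔
        j * (n₁ - n₀) * d ≡ n * g [ZMOD g * d] := by
    have key := exists_intCast_add_div_sub_div_iff (z := n₀) (x := j * (n₁ - n₀)) (y := n)
      (Int.natCast_ne_zero.2 hg.ne') (Int.natCast_ne_zero.2 hd)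
    rw [apply_toR_add_zsmul hv (by positivity) hn₀ hn₁]
    simpa only [Int.cast_natCast] using key
  constructor
  · rintro ⟨⟨j, hj, rfl⟩, hk⟩
    exact ⟨j, ⟨hj, (hvalue j).1 hk⟩, rfl⟩
  · rintro ⟨j, ⟨hj, hmod⟩, rfl⟩
    exact ⟨⟨j, hj, rfl⟩, (hvalue j).2 hmod⟩

/-- Let `F` be a lattice segment with endpoints `P₀ ≠ P₁` in `ℤ²`, and
`v` an affine function, integer-valued at both endpoints. For `d ≥ 2` and `n` coprime
to `d`, the number `N̄(n/d)` of lattice points `P ∈ F` with `v(P) ≡ n/d (mod ℤ)` is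
independent of `n`. -/
theorem stmt2 (P₀ P₁ : ℤ × ℤ) (hne : P₀ ≠ P₁)
    (v : ℝ × ℝ → ℝ) (hv : ∃ a b c : ℝ, ∀ p : ℝ × ℝ, v p = a * p.1 + b * p.2 + c)
    (h₀ : ∃ n : ℤ, v (toR P₀) = (n : ℝ)) (h₁ : ∃ n : ℤ, v (toR P₁) = (n : ℝ))
    (d : ℕ) (hd : 2 ≤ d)
    (N : ℤ → ℕ)
    (hN : ∀ n : ℤ, N n =
      {P : ℤ × ℤ | toR P ∈ segment ℝ (toR P₀) (toR P₁) ∧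
        ∃ k : ℤ, v (toR P) - (n : ℝ) / (d : ℝ) = (k : ℝ)}.ncard) :
    ∀ m n : ℤ, Int.gcd m (d : ℤ) = 1 → Int.gcd n (d : ℤ) = 1 → N m = N n := by
  obtain ⟨a, b, c, hv⟩ := hv
  obtain ⟨n₀, hn₀⟩ := h₀
  obtain ⟨n₁, hn₁⟩ := h₁
  obtain ⟨g, hg, e, he, rfl⟩ := exists_eq_add_zsmul_of_ne hne
  have he₀ : e ≠ 0 := by
    rintro rfl
    exact not_isCoprime_zero_zero he
  have hN_card (n : ℤ) : N n = #(residueFiber g (n₁ - n₀) d n) := by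
    rw [hN, setOf_mem_segment_modEq_eq_image hv he hg hn₀ hn₁ (by omega), Set.ncard_coe_finset]
    exact card_image_of_injective _ ((add_right_injective P₀).comp (smul_left_injective ℤ he₀))
  have hN_le (m n : ℤ) (hm : IsCoprime m d) (hn : IsCoprime n d) : N n ≤ N m := by
    obtain ⟨u, hu, hun⟩ := exists_isCoprime_mul_modEq (by omega) hg.ne' hm hn
    have hdn : ¬ (d : ℤ) ∣ n := fun h => by
      have := Int.isUnit_iff_natAbs_eq.1 (hn.isUnit_of_dvd' h dvd_rfl)
      omega
    rw [hN_card, hN_card]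
    exact card_residueFiber_le (by positivity) hu hun hdn
  intro m n hm hn
  rw [← Int.isCoprime_iff_gcd_eq_one] at hm hn
  exact le_antisymm (hN_le n m hn hm) (hN_le m n hm hn)
end

section
/- Given rationals s₁ > s₂, there exist r ≥ 0 and fractions nᵢ/dᵢ (i = 0,…,r+1) with dᵢ > 0, such that s₁ = n₀/d₀ > n₁/d₁ > … > n_r/d_r > n_{r+1}/d_{r+1} = s₂ and nᵢ d_{i+1} − n_{i+1} dᵢ = 1 for all 0 ≤ i ≤ r. -/
/-!
Write `s₁ = a/b` and `s₂ = c/e` in lowest terms and induct on `D = a e − c b > 0`. If `D > 1`,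
pick a Bézout partner `x/y` of `a/b` (so `a y − x b = 1`); shifting it by multiples of `(a, b)`
changes `x e − c y` by multiples of `D`, so it can be brought into `[0, D)`. The identity
`b (x e − c y) = y D − e` then forces `y > 0`, and `x e − c y = 0` would make `D` divide `1`.
Hence `x/y` starts a chain of strictly smaller determinant towards `c/e`.
-/

/-- `UnimodularChain a b c e`: fractions `a/b = n₀/d₀, n₁/d₁, …, n_{r+1}/d_{r+1} = c/e` with
positive denominators and `nᵢ d_{i+1} − n_{i+1} dᵢ = 1`. -/
inductive UnimodularChain : ℤ → ℤ → ℤ → ℤ → Prop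
  | single {a b c e : ℤ} : 0 < b → 0 < e → a * e - c * b = 1 → UnimodularChain a b c e
  | cons {a b x y c e : ℤ} : 0 < b → a * y - x * b = 1 → UnimodularChain x y c e →
      UnimodularChain a b c e

namespace UnimodularChain

theorem exists_seq {a b c e : ℤ} (hchain : UnimodularChain a b c e) :
    ∃ (r : ℕ) (n d : ℕ → ℤ), (∀ i ≤ r + 1, 0 < d i) ∧ n 0 = a ∧ d 0 = b ∧
      n (r + 1) = c ∧ d (r + 1) = e ∧ ∀ i ≤ r, n i * d (i + 1) - n (i + 1) * d i = 1 := by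
  induction hchain with
  | @single a b c e hb he hdet =>
    refine ⟨0, fun i => if i = 0 then a else c, fun i => if i = 0 then b else e,
      fun i _ => ?_, rfl, rfl, rfl, rfl, fun i hi => ?_⟩
    · dsimp only; split_ifs <;> assumption
    · obtain rfl : i = 0 := by omega
      simpa using hdet
  | @cons a b x y c e hb hdet _ ih =>
    obtain ⟨r, n, d, hpos, hn0, hd0, hnr, hdr, hstep⟩ := ih
    refine ⟨r + 1, Nat.rec a fun j _ => n j, Nat.rec b fun j _ => d j,
      fun i hi => ?_, rfl, rfl, hnr, hdr, fun i hi => ?_⟩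
    · cases i with
      | zero => exact hb
      | succ j => exact hpos j (by omega)
    · cases i with
      | zero => simpa [hn0, hd0] using hdet
      | succ j => exact hstep j (by omega)

end UnimodularChain

theorem exists_bezout_det_mem_Ico {a b c e : ℤ} (hab : IsCoprime a b) (hD : 0 < a * e - c * b) :
    ∃ x y : ℤ, a * y - x * b = 1 ∧ 0 ≤ x * e - c * y ∧ x * e - c * y < a * e - c * b := by
  obtain ⟨u, v, huv⟩ := hab
  set D := a * e - c * b
  set E := -v * e - c * u
  refine ⟨-v - E / D * a, u - E / D * b, by linear_combination huv, ?_⟩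
  have hmod : (-v - E / D * a) * e - c * (u - E / D * b) = E % D := by
    rw [Int.emod_def]; ring
  rw [hmod]
  exact ⟨Int.emod_nonneg E hD.ne', Int.emod_lt_of_pos E hD⟩

theorem det_mul_denom_eq {a b x y c e : ℤ} (hxy : a * y - x * b = 1) :
    b * (x * e - c * y) = y * (a * e - c * b) - e := by
  linear_combination -e * hxy

theorem det_eq_one_of_det_eq_zero {a b x y c e : ℤ} (hce : IsCoprime c e) (he : 0 < e)
    (hD : 0 < a * e - c * b) (hxy : a * y - x * b = 1) (h0 : x * e - c * y = 0) :
    a * e - c * b = 1 := by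
  obtain ⟨k, rfl⟩ : e ∣ y := hce.symm.dvd_of_dvd_mul_left ⟨x, by linear_combination -h0⟩
  have hx : x = c * k := mul_right_cancel₀ he.ne' (by linear_combination h0)
  subst hx
  exact Int.eq_one_of_dvd_one hD.le ⟨k, by linear_combination -hxy⟩

theorem UnimodularChain.of_det_pos {a b c e : ℤ} (hb : 0 < b) (he : 0 < e) (hab : IsCoprime a b)
    (hce : IsCoprime c e) (hD : 0 < a * e - c * b) : UnimodularChain a b c e := by
  by_cases hD1 : a * e - c * b = 1
  · exact .single hb he hD1
  obtain ⟨x, y, hxy, hD'₀, hD'⟩ := exists_bezout_det_mem_Ico hab hD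
  have hD'pos : 0 < x * e - c * y :=
    hD'₀.lt_of_ne fun h0 => hD1 (det_eq_one_of_det_eq_zero hce he hD hxy h0.symm)
  have hy : 0 < y := by
    have := det_mul_denom_eq (c := c) (e := e) hxy
    exact pos_of_mul_pos_left (by nlinarith) hD.le
  have hxy' : IsCoprime x y := ⟨-b, a, by linear_combination hxy⟩
  exact .cons hb hxy (of_det_pos hy he hxy' hce hD'pos)
termination_by (a * e - c * b).toNat
decreasing_by omega

theorem div_lt_div_of_det_eq_one {a b c e : ℤ} (hb : 0 < b) (he : 0 < e) (h : a * e - c * b = 1) :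
    (c : ℚ) / e < a / b := by
  rw [div_lt_div_iff₀ (by exact_mod_cast he) (by exact_mod_cast hb)]
  exact_mod_cast (by omega : c * b < a * e)

/-- Given rationals `s₁ > s₂`, there is a chain of fractions
`s₁ = n₀/d₀ > n₁/d₁ > … > n_{r+1}/d_{r+1} = s₂` with positive denominators and
consecutive determinants `nᵢ d_{i+1} − n_{i+1} dᵢ = 1`. -/
theorem stmt8 (s₁ s₂ : ℚ) (h : s₂ < s₁) :
    ∃ (r : ℕ) (n d : ℕ → ℤ),
      (∀ i ≤ r + 1, 0 < d i) ∧
      ((n 0 : ℚ) / (d 0 : ℚ) = s₁) ∧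
      ((n (r + 1) : ℚ) / (d (r + 1) : ℚ) = s₂) ∧
      (∀ i ≤ r, (n (i + 1) : ℚ) / (d (i + 1) : ℚ) < (n i : ℚ) / (d i : ℚ)) ∧
      (∀ i ≤ r, n i * d (i + 1) - n (i + 1) * d i = 1) := by
  have hden₁ : (0 : ℤ) < s₁.den := mod_cast s₁.pos
  have hden₂ : (0 : ℤ) < s₂.den := mod_cast s₂.pos
  have hD : 0 < s₁.num * s₂.den - s₂.num * s₁.den := by
    rw [← Rat.num_div_den s₁, ← Rat.num_div_den s₂,
      div_lt_div_iff₀ (mod_cast s₂.pos) (mod_cast s₁.pos)] at h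
    have : s₂.num * (s₁.den : ℤ) < s₁.num * s₂.den := mod_cast h
    omega
  obtain ⟨r, n, d, hpos, hn0, hd0, hnr, hdr, hdet⟩ :=
    (UnimodularChain.of_det_pos hden₁ hden₂ s₁.isCoprime_num_den s₂.isCoprime_num_den hD).exists_seq
  refine ⟨r, n, d, hpos, ?_, ?_, fun i hi => ?_, hdet⟩
  · rw [hn0, hd0]; exact Rat.num_div_den s₁
  · rw [hnr, hdr]; exact Rat.num_div_den s₂
  · exact div_lt_div_of_det_eq_one (hpos i (by omega)) (hpos (i + 1) (by omega)) (hdet i hi)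
end
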